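/- arXiv:1508.04526 — 9 statements merged into one kernel-verified Lean document; each statement's English description precedes it below -/
import Mathlib

section
/- Let D_max ∈ (0, ∞], let R_s : (0, D_max) → (0, ∞) be a twice continuously differentiable bijection onto (0, ∞) with R_s′(D) < 0 and R_s″(D) > 0 for all D ∈ (0, D_max), and let R_c : (0, ∞) → (0, ∞) be twice continuously differentiable with R_c′(p) > 0 and R_c″(p) < 0 for all p > 0. For p, q > 0 define D(p, q) as the unique d ∈ (0, D_max) satisfying R_s(d) = R_c(p)/q. Then the function D†(p, q) := q · D(p, q) is convex on the set {(p, q) : p > 0, q > 0}. -/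
/-!
For `(p, q) = a • (p₁, q₁) + b • (p₂, q₂)` put `wᵢ = aᵢ qᵢ / q` and `c = w₁ D(p₁, q₁) + w₂ D(p₂, q₂)`,
so that `q c = a q₁ D(p₁, q₁) + b q₂ D(p₂, q₂)`. Convexity of `R_s` and concavity of `R_c` give
`R_s(c) ≤ Σ wᵢ R_s(D(pᵢ, qᵢ)) = (a R_c(p₁) + b R_c(p₂)) / q ≤ R_c(p) / q = R_s(D(p, q))`,
hence `D(p, q) ≤ c` because `R_s` is decreasing.
-/

open Set

theorem convexOn_mul_of_apply_eq_div {E : Type*} [AddCommGroup E] [Module ℝ E]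
    {P : Set E} {S : Set ℝ} {f : ℝ → ℝ} {g : E → ℝ} {D : E → ℝ → ℝ}
    (hf : ConvexOn ℝ S f) (hf_anti : StrictAntiOn f S) (hg : ConcaveOn ℝ P g)
    (hD : ∀ p ∈ P, ∀ q : ℝ, 0 < q → D p q ∈ S ∧ f (D p q) = g p / q) :
    ConvexOn ℝ (P ×ˢ Ioi 0) (fun x : E × ℝ => x.2 * D x.1 x.2) := by
  refine ⟨hg.1.prod (convex_Ioi 0), ?_⟩
  rintro ⟨p₁, q₁⟩ ⟨hp₁, hq₁ : 0 < q₁⟩ ⟨p₂, q₂⟩ ⟨hp₂, hq₂ : 0 < q₂⟩ a b ha hb hab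
  simp only [Prod.smul_mk, Prod.mk_add_mk, smul_eq_mul]
  set p := a • p₁ + b • p₂
  set q := a * q₁ + b * q₂
  have hq : 0 < q := convex_Ioi (0 : ℝ) hq₁ hq₂ ha hb hab
  obtain ⟨hd₁, hf₁⟩ := hD p₁ hp₁ q₁ hq₁
  obtain ⟨hd₂, hf₂⟩ := hD p₂ hp₂ q₂ hq₂
  obtain ⟨hd, hfd⟩ := hD p (hg.1 hp₁ hp₂ ha hb hab) q hq
  set w₁ := a * q₁ / q
  set w₂ := b * q₂ / q
  have hw₁ : 0 ≤ w₁ := by positivity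
  have hw₂ : 0 ≤ w₂ := by positivity
  have hw : w₁ + w₂ = 1 := by rw [← add_div, div_self hq.ne']
  set c := w₁ * D p₁ q₁ + w₂ * D p₂ q₂
  have hc : c ∈ S := hf.1 hd₁ hd₂ hw₁ hw₂ hw
  have hfc : f c ≤ f (D p q) := calc
    f c ≤ w₁ * f (D p₁ q₁) + w₂ * f (D p₂ q₂) := hf.2 hd₁ hd₂ hw₁ hw₂ hw
    _ = (a * g p₁ + b * g p₂) / q := by rw [hf₁, hf₂]; simp only [w₁, w₂]; field_simp
    _ ≤ g p / q := by gcongr; exact hg.2 hp₁ hp₂ ha hb hab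
    _ = f (D p q) := hfd.symm
  calc q * D p q ≤ q * c := by gcongr; exact (hf_anti.le_iff_ge hc hd).1 hfc
    _ = a * (q₁ * D p₁ q₁) + b * (q₂ * D p₂ q₂) := by simp only [c, w₁, w₂]; field_simp

theorem stmt0_general
    (Dmax : EReal)
    (S : Set ℝ) (hS : S = {d : ℝ | 0 < d ∧ (d : EReal) < Dmax})
    (Rs Rc : ℝ → ℝ)
    (hRsSmooth : ContDiffOn ℝ 2 Rs S)
    (hRs' : ∀ d ∈ S, deriv Rs d < 0)
    (hRs'' : ∀ d ∈ S, deriv (deriv Rs) d > 0)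
    (hRcSmooth : ContDiffOn ℝ 2 Rc (Set.Ioi (0 : ℝ)))
    (hRc'' : ∀ p : ℝ, 0 < p → deriv (deriv Rc) p < 0)
    (D : ℝ → ℝ → ℝ)
    (hD : ∀ p q : ℝ, 0 < p → 0 < q → D p q ∈ S ∧ Rs (D p q) = Rc p / q) :
    ConvexOn ℝ (Set.Ioi (0 : ℝ) ×ˢ Set.Ioi (0 : ℝ))
      (fun x : ℝ × ℝ => x.2 * D x.1 x.2) := by
  have hS_conv : Convex ℝ S := by
    refine OrdConnected.convex ⟨fun x hx y hy z hz => ?_⟩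
    rw [hS] at hx hy ⊢
    exact ⟨hx.1.trans_le hz.1, (EReal.coe_le_coe_iff.2 hz.2).trans_lt hy.2⟩
  have hRs_conv : ConvexOn ℝ S Rs :=
    (strictConvexOn_of_deriv2_pos' hS_conv hRsSmooth.continuousOn hRs'').convexOn
  have hRs_anti : StrictAntiOn Rs S :=
    strictAntiOn_of_deriv_neg hS_conv hRsSmooth.continuousOn
      fun d hd => hRs' d (interior_subset hd)
  have hRc_conc : ConcaveOn ℝ (Ioi 0) Rc :=
    (strictConcaveOn_of_deriv2_neg' (convex_Ioi 0) hRcSmooth.continuousOn hRc'').concaveOn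
  exact convexOn_mul_of_apply_eq_div hRs_conv hRs_anti hRc_conc fun p hp q hq => hD p q hp hq

/-- With `Dmax ∈ (0, ∞]` (encoded as an `EReal`), a rate-distortion
function `Rs` that is a twice continuously differentiable bijection from
`(0, Dmax)` onto `(0, ∞)` with `Rs' < 0`, `Rs'' > 0`, and a channel rate `Rc`
twice continuously differentiable on `(0, ∞)` with `Rc' > 0`, `Rc'' < 0`,
the weighted distortion `D†(p, q) = q · D(p, q)`, where `D(p, q)` is the unique
`d ∈ (0, Dmax)` with `Rs d = Rc p / q`, is convex on `{(p, q) : p > 0, q > 0}`. -/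
theorem stmt0
    (Dmax : EReal) (hDmax : 0 < Dmax)
    (S : Set ℝ) (hS : S = {d : ℝ | 0 < d ∧ (d : EReal) < Dmax})
    (Rs Rc : ℝ → ℝ)
    (hRsSmooth : ContDiffOn ℝ 2 Rs S)
    (hRsBij : Set.BijOn Rs S (Set.Ioi (0 : ℝ)))
    (hRs' : ∀ d ∈ S, deriv Rs d < 0)
    (hRs'' : ∀ d ∈ S, deriv (deriv Rs) d > 0)
    (hRcSmooth : ContDiffOn ℝ 2 Rc (Set.Ioi (0 : ℝ)))
    (hRcPos : ∀ p : ℝ, 0 < p → 0 < Rc p)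
    (hRc' : ∀ p : ℝ, 0 < p → 0 < deriv Rc p)
    (hRc'' : ∀ p : ℝ, 0 < p → deriv (deriv Rc) p < 0)
    (D : ℝ → ℝ → ℝ)
    (hD : ∀ p q : ℝ, 0 < p → 0 < q → D p q ∈ S ∧ Rs (D p q) = Rc p / q) :
    ConvexOn ℝ (Set.Ioi (0 : ℝ) ×ˢ Set.Ioi (0 : ℝ))
      (fun x : ℝ × ℝ => x.2 * D x.1 x.2) :=
  stmt0_general Dmax S hS Rs Rc hRsSmooth hRs' hRs'' hRcSmooth hRc'' D hD
end

section
/- Let 0 < D_max < ∞ and 0 < R_th < ∞, let R_s : (0, D_max) → (0, R_th) be a twice continuously differentiable bijection onto (0, R_th) with R_s′(D) < 0 and R_s″(D) > 0 for all D ∈ (0, D_max), R_s(D) → R_th as D → 0⁺ and R_s(D) → 0 as D → D_max⁻, and let R_c : (0, ∞) → (0, ∞) be twice continuously differentiable with R_c′(p) > 0 and R_c″(p) < 0 for all p > 0. For p, q > 0 define D(p, q) := 0 if R_c(p)/q ≥ R_th, and otherwise D(p, q) is the unique d ∈ (0, D_max) with R_s(d) = R_c(p)/q. Then the function D†(p,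 q) := q · D(p, q) is convex on the set {(p, q) : p > 0, q > 0}. -/
open Set Filter Topology Function

/-! Extending `Rs` by `Rs 0 = Rth` keeps it convex on `[0, Dmax)` (by continuity), and `D(p, q)`
becomes the least `d ∈ [0, Dmax)` with `Rs d ≤ Rc p / q`. For `(p, q) = a (p₁, q₁) + b (p₂, q₂)`,
`d = (a q₁ D(p₁, q₁) + b q₂ D(p₂, q₂)) / q` is a convex combination with weights `a q₁ / q` and
`b q₂ / q`; convexity of `Rs` and concavity of `Rc` give `Rs d ≤ Rc p / q`, hence `D(p, q) ≤ d`,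
which after multiplying by `q` is the convexity inequality for `q · D(p, q)`. -/

theorem ConvexOn.of_subset_closure {E : Type*} [AddCommGroup E] [Module ℝ E]
    [TopologicalSpace E] [ContinuousAdd E] [ContinuousSMul ℝ E] {s t : Set E} {f : E → ℝ}
    (hf : ConvexOn ℝ s f) (hst : s ⊆ t) (hts : t ⊆ closure s) (ht : Convex ℝ t)
    (hft : ContinuousOn f t) : ConvexOn ℝ t f := by
  refine ⟨ht, fun x hx y hy a b ha hb hab => ?_⟩
  have hxy : (x, y) ∈ closure (s ×ˢ s) := by
    rw [closure_prod_eq]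
    exact ⟨hts hx, hts hy⟩
  have hcomb : Continuous fun z : E × E => a • z.1 + b • z.2 := by fun_prop
  refine ContinuousWithinAt.closure_le (f := fun z : E × E => f (a • z.1 + b • z.2))
    (g := fun z => a • f z.1 + b • f z.2) hxy ?_ ?_ fun z hz => hf.2 hz.1 hz.2 ha hb hab
  · exact ContinuousWithinAt.comp (f := fun z : E × E => a • z.1 + b • z.2)
      (hft _ (ht hx hy ha hb hab)) hcomb.continuousWithinAt
      fun z (hz : z ∈ s ×ˢ s) => ht (hst hz.1) (hst hz.2) ha hb hab
  · exact ((((hft x hx).mono hst).comp continuousWithinAt_fst fun z hz => hz.1).const_smul a).add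
      ((((hft y hy).mono hst).comp continuousWithinAt_snd fun z hz => hz.2).const_smul b)

theorem ConvexOn.update_Ico_of_tendsto {f : ℝ → ℝ} {a b L : ℝ} (hf : ConvexOn ℝ (Ioo a b) f)
    (hL : Tendsto f (𝓝[>] a) (𝓝 L)) : ConvexOn ℝ (Ico a b) (update f a L) := by
  have hcongr : EqOn f (update f a L) (Ioo a b) := fun x hx => (update_of_ne hx.1.ne' _ _).symm
  refine (hf.congr hcongr).of_subset_closure Ioo_subset_Ico_self ?_ (convex_Ico a b) ?_
  · intro x hx
    rw [closure_Ioo (hx.1.trans_lt hx.2).ne]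
    exact Ico_subset_Icc_self hx
  · intro x hx
    rcases hx.1.eq_or_lt with rfl | hax
    · rw [continuousWithinAt_update_same, Ico_sdiff_left]
      exact hL.mono_left (nhdsWithin_mono _ Ioo_subset_Ioi_self)
    · refine ((continuousAt_update_of_ne hax.ne').2 ?_).continuousWithinAt
      exact (hf.continuousOn isOpen_Ioo).continuousAt (Ioo_mem_nhds hax hx.2)

theorem StrictAntiOn.isLeast_update_le {g : ℝ → ℝ} {a b L r d : ℝ}
    (hg : StrictAntiOn g (Ioo a b)) (hab : a < b) (hL : L ≤ r → d = a)
    (hlt : r < L → d ∈ Ioo a b ∧ g d = r) :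
    IsLeast {s ∈ Ico a b | update g a L s ≤ r} d := by
  rcases le_or_gt L r with hLr | hrL
  · obtain rfl := hL hLr
    exact ⟨⟨left_mem_Ico.2 hab, by rwa [update_self]⟩, fun s hs => hs.1.1⟩
  obtain ⟨hd, hgd⟩ := hlt hrL
  refine ⟨⟨Ioo_subset_Ico_self hd, by rw [update_of_ne hd.1.ne', hgd]⟩, ?_⟩
  rintro s ⟨hs, hsr⟩
  rcases hs.1.eq_or_lt with rfl | has
  · rw [update_self] at hsr
    exact absurd hsr hrL.not_ge
  · rw [update_of_ne has.ne', ← hgd] at hsr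
    exact (hg.le_iff_ge ⟨has, hs.2⟩ hd).1 hsr

theorem convexOn_mul_of_isLeast {E : Type*} [AddCommGroup E] [Module ℝ E] {I : Set ℝ}
    {P : Set E} {φ : ℝ → ℝ} {ψ : E → ℝ} {D : E → ℝ → ℝ} (hφ : ConvexOn ℝ I φ)
    (hψ : ConcaveOn ℝ P ψ) (hD : ∀ p ∈ P, ∀ q, 0 < q → IsLeast {s ∈ I | φ s ≤ ψ p / q} (D p q)) :
    ConvexOn ℝ (P ×ˢ Ioi 0) fun x => x.2 * D x.1 x.2 := by
  refine ⟨hψ.1.prod (convex_Ioi 0), ?_⟩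
  rintro ⟨p₁, q₁⟩ ⟨hp₁, hq₁ : 0 < q₁⟩ ⟨p₂, q₂⟩ ⟨hp₂, hq₂ : 0 < q₂⟩ a b ha hb hab
  simp only [Prod.smul_mk, Prod.mk_add_mk, smul_eq_mul]
  set q := a * q₁ + b * q₂
  have hq : 0 < q := convex_Ioi (0 : ℝ) hq₁ hq₂ ha hb hab
  have hp : a • p₁ + b • p₂ ∈ P := hψ.1 hp₁ hp₂ ha hb hab
  obtain ⟨⟨hd₁, hφd₁⟩, -⟩ := hD p₁ hp₁ q₁ hq₁
  obtain ⟨⟨hd₂, hφd₂⟩, -⟩ := hD p₂ hp₂ q₂ hq₂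
  set d₁ := D p₁ q₁
  set d₂ := D p₂ q₂
  have hμ : 0 ≤ a * q₁ / q := by positivity
  have hν : 0 ≤ b * q₂ / q := by positivity
  have hμν : a * q₁ / q + b * q₂ / q = 1 := by rw [← add_div, div_self hq.ne']
  have hφd : φ (a * q₁ / q * d₁ + b * q₂ / q * d₂) ≤ ψ (a • p₁ + b • p₂) / q :=
    calc φ (a * q₁ / q * d₁ + b * q₂ / q * d₂)
        ≤ a * q₁ / q * φ d₁ + b * q₂ / q * φ d₂ := hφ.2 hd₁ hd₂ hμ hν hμν
      _ ≤ a * q₁ / q * (ψ p₁ / q₁) + b * q₂ / q * (ψ p₂ / q₂) := by gcongr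
      _ = (a * ψ p₁ + b * ψ p₂) / q := by field_simp
      _ ≤ ψ (a • p₁ + b • p₂) / q := by gcongr; exact hψ.2 hp₁ hp₂ ha hb hab
  have hDle : D (a • p₁ + b • p₂) q ≤ a * q₁ / q * d₁ + b * q₂ / q * d₂ :=
    (hD _ hp q hq).2 ⟨hφ.1 hd₁ hd₂ hμ hν hμν, hφd⟩
  calc q * D (a • p₁ + b • p₂) q ≤ q * (a * q₁ / q * d₁ + b * q₂ / q * d₂) := by gcongr
    _ = a * (q₁ * d₁) + b * (q₂ * d₂) := by field_simp

theorem stmt1_general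
    (Dmax Rth : ℝ) (hDmax : 0 < Dmax)
    (Rs Rc : ℝ → ℝ)
    (hRsSmooth : ContDiffOn ℝ 2 Rs (Set.Ioo 0 Dmax))
    (hRs' : ∀ d ∈ Set.Ioo 0 Dmax, deriv Rs d < 0)
    (hRs'' : ∀ d ∈ Set.Ioo 0 Dmax, deriv (deriv Rs) d > 0)
    (hRs0 : Tendsto Rs (nhdsWithin 0 (Set.Ioi 0)) (nhds Rth))
    (hRcSmooth : ContDiffOn ℝ 2 Rc (Set.Ioi (0 : ℝ)))
    (hRc'' : ∀ p : ℝ, 0 < p → deriv (deriv Rc) p < 0)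
    (D : ℝ → ℝ → ℝ)
    (hDzero : ∀ p q : ℝ, 0 < p → 0 < q → Rth ≤ Rc p / q → D p q = 0)
    (hDpos : ∀ p q : ℝ, 0 < p → 0 < q → Rc p / q < Rth →
      D p q ∈ Set.Ioo 0 Dmax ∧ Rs (D p q) = Rc p / q) :
    ConvexOn ℝ (Set.Ioi (0 : ℝ) ×ˢ Set.Ioi (0 : ℝ))
      (fun x : ℝ × ℝ => x.2 * D x.1 x.2) := by
  have hRsConvex : ConvexOn ℝ (Ioo 0 Dmax) Rs :=
    (strictConvexOn_of_deriv2_pos' (convex_Ioo 0 Dmax) hRsSmooth.continuousOn hRs'').convexOn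
  have hRsAnti : StrictAntiOn Rs (Ioo 0 Dmax) :=
    strictAntiOn_of_deriv_neg (convex_Ioo 0 Dmax) hRsSmooth.continuousOn
      (by rwa [interior_Ioo])
  have hRcConcave : ConcaveOn ℝ (Ioi 0) Rc :=
    (strictConcaveOn_of_deriv2_neg' (convex_Ioi 0) hRcSmooth.continuousOn hRc'').concaveOn
  exact convexOn_mul_of_isLeast (hRsConvex.update_Ico_of_tendsto hRs0) hRcConcave
    fun p hp q hq => hRsAnti.isLeast_update_le hDmax (hDzero p q hp hq) (hDpos p q hp hq)

/-- With `0 < Dmax < ∞` and `0 < Rth < ∞`, a rate-distortion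
function `Rs` that is a twice continuously differentiable bijection from
`(0, Dmax)` onto `(0, Rth)` with `Rs' < 0`, `Rs'' > 0`, `Rs → Rth` at `0⁺`,
`Rs → 0` at `Dmax⁻`, and a channel rate `Rc` twice continuously differentiable
on `(0, ∞)` with `Rc' > 0`, `Rc'' < 0`, the weighted distortion
`D†(p,q) = q · D(p,q)` — where `D(p,q) = 0` when `Rc p / q ≥ Rth` and otherwise
is the unique `d ∈ (0, Dmax)` with `Rs d = Rc p / q` — is convex on
`{(p, q) : p > 0, q > 0}`. -/
theorem stmt1
    (Dmax Rth : ℝ) (hDmax : 0 < Dmax) (hRth : 0 < Rth)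
    (Rs Rc : ℝ → ℝ)
    (hRsSmooth : ContDiffOn ℝ 2 Rs (Set.Ioo 0 Dmax))
    (hRsBij : Set.BijOn Rs (Set.Ioo 0 Dmax) (Set.Ioo 0 Rth))
    (hRs' : ∀ d ∈ Set.Ioo 0 Dmax, deriv Rs d < 0)
    (hRs'' : ∀ d ∈ Set.Ioo 0 Dmax, deriv (deriv Rs) d > 0)
    (hRs0 : Tendsto Rs (nhdsWithin 0 (Set.Ioi 0)) (nhds Rth))
    (hRsD : Tendsto Rs (nhdsWithin Dmax (Set.Iio Dmax)) (nhds 0))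
    (hRcSmooth : ContDiffOn ℝ 2 Rc (Set.Ioi (0 : ℝ)))
    (hRcPos : ∀ p : ℝ, 0 < p → 0 < Rc p)
    (hRc' : ∀ p : ℝ, 0 < p → 0 < deriv Rc p)
    (hRc'' : ∀ p : ℝ, 0 < p → deriv (deriv Rc) p < 0)
    (D : ℝ → ℝ → ℝ)
    (hDzero : ∀ p q : ℝ, 0 < p → 0 < q → Rth ≤ Rc p / q → D p q = 0)
    (hDpos : ∀ p q : ℝ, 0 < p → 0 < q → Rc p / q < Rth →
      D p q ∈ Set.Ioo 0 Dmax ∧ Rs (D p q) = Rc p / q) :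
    ConvexOn ℝ (Set.Ioi (0 : ℝ) ×ˢ Set.Ioi (0 : ℝ))
      (fun x : ℝ × ℝ => x.2 * D x.1 x.2) :=
  stmt1_general Dmax Rth hDmax Rs Rc hRsSmooth hRs' hRs'' hRs0 hRcSmooth hRc'' D hDzero hDpos
end

section
/- Let a ≤ c ≤ d ≤ b be real numbers and let g : [a, b] → ℝ be continuous with g(x) ≥ 0 for all x ∈ [a, b], g(x) = 0 for all x ∈ [c, d], g convex on [a, c], and g convex on [d, b]. Then g is convex on [a, b]. -/
/-! Convexity glues across a point where the function attains its minimum: every slope of a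
chord to the left of it is `≤ 0` and every slope to the right is `≥ 0`. Since `g ≥ 0` vanishes
on `[c, d]`, glue the zero piece to `[a, c]` at `c`, then `[d, b]` to the result at `d`. -/

open Set

lemma div_le_div_of_nonpos_left {a b c : ℝ} (ha : a ≤ 0) (hb : 0 < b) (hbc : b ≤ c) :
    a / b ≤ a / c := by
  simpa only [neg_div, neg_le_neg_iff] using div_le_div_of_nonneg_left (neg_nonneg.2 ha) hb hbc

theorem ConvexOn.Icc_union_of_isMinOn {f : ℝ → ℝ} {a m b : ℝ}
    (hf₁ : ConvexOn ℝ (Icc a m) f) (hf₂ : ConvexOn ℝ (Icc m b) f)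
    (hmin : IsMinOn f (Icc a b) m) : ConvexOn ℝ (Icc a b) f := by
  refine convexOn_of_slope_mono_adjacent (convex_Icc a b) fun {x y z} hx hz hxy hyz ↦ ?_
  rcases le_or_gt z m with hzm | hmz
  · exact hf₁.slope_mono_adjacent ⟨hx.1, hxy.le.trans (hyz.le.trans hzm)⟩
      ⟨hx.1.trans (hxy.trans hyz).le, hzm⟩ hxy hyz
  rcases le_or_gt m x with hmx | hxm
  · exact hf₂.slope_mono_adjacent ⟨hmx, (hxy.trans hyz).le.trans hz.2⟩
      ⟨hmx.trans (hxy.trans hyz).le, hz.2⟩ hxy hyz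
  have hy : y ∈ Icc a b := ⟨hx.1.trans hxy.le, hyz.le.trans hz.2⟩
  have hfx : f m ≤ f x := hmin hx
  have hfy : f m ≤ f y := hmin hy
  have hfz : f m ≤ f z := hmin hz
  rcases lt_trichotomy y m with hym | rfl | hmy
  · calc (f y - f x) / (y - x) ≤ (f m - f y) / (m - y) :=
          hf₁.slope_mono_adjacent ⟨hx.1, hxm.le⟩ ⟨hx.1.trans hxm.le, le_rfl⟩ hxy hym
      _ ≤ (f m - f y) / (z - y) :=
          div_le_div_of_nonpos_left (by linarith) (by linarith) (by linarith)
      _ ≤ (f z - f y) / (z - y) := div_le_div_of_nonneg_right (by linarith) (by linarith)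
  · calc (f y - f x) / (y - x) ≤ 0 := div_nonpos_of_nonpos_of_nonneg (by linarith) (by linarith)
      _ ≤ (f z - f y) / (z - y) := div_nonneg (by linarith) (by linarith)
  · calc (f y - f x) / (y - x) ≤ (f y - f m) / (y - x) :=
          div_le_div_of_nonneg_right (by linarith) (by linarith)
      _ ≤ (f y - f m) / (y - m) :=
          div_le_div_of_nonneg_left (by linarith) (by linarith) (by linarith)
      _ ≤ (f z - f y) / (z - y) :=
          hf₂.slope_mono_adjacent ⟨le_rfl, hmz.le.trans hz.2⟩ ⟨hmy.le.trans hyz.le, hz.2⟩ hmy hyz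

theorem stmt2_general
    (a b c d : ℝ) (hcd : c ≤ d) (hdb : d ≤ b)
    (g : ℝ → ℝ)
    (hnonneg : ∀ x ∈ Set.Icc a b, 0 ≤ g x)
    (hzero : ∀ x ∈ Set.Icc c d, g x = 0)
    (hconv1 : ConvexOn ℝ (Set.Icc a c) g)
    (hconv2 : ConvexOn ℝ (Set.Icc d b) g) :
    ConvexOn ℝ (Set.Icc a b) g := by
  have hmin {m : ℝ} (hm : m ∈ Icc c d) (s : Set ℝ) (hs : s ⊆ Icc a b) : IsMinOn g s m :=
    fun x hx ↦ (hzero m hm).trans_le (hnonneg x (hs hx))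
  have hmid : ConvexOn ℝ (Icc c d) g :=
    (convexOn_const 0 (convex_Icc c d)).congr fun x hx ↦ (hzero x hx).symm
  have hleft : ConvexOn ℝ (Icc a d) g :=
    hconv1.Icc_union_of_isMinOn hmid <|
      hmin ⟨le_rfl, hcd⟩ _ (Icc_subset_Icc_right hdb)
  exact hleft.Icc_union_of_isMinOn hconv2 <| hmin ⟨hcd, le_rfl⟩ _ subset_rfl

/-- One-dimensional gluing lemma. If `a ≤ c ≤ d ≤ b`,
`g` is continuous and nonnegative on `[a, b]`, vanishes on `[c, d]`, and is
convex on `[a, c]` and on `[d, b]`, then `g` is convex on `[a, b]`. -/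
theorem stmt2
    (a b c d : ℝ) (hac : a ≤ c) (hcd : c ≤ d) (hdb : d ≤ b)
    (g : ℝ → ℝ)
    (hcont : ContinuousOn g (Set.Icc a b))
    (hnonneg : ∀ x ∈ Set.Icc a b, 0 ≤ g x)
    (hzero : ∀ x ∈ Set.Icc c d, g x = 0)
    (hconv1 : ConvexOn ℝ (Set.Icc a c) g)
    (hconv2 : ConvexOn ℝ (Set.Icc d b) g) :
    ConvexOn ℝ (Set.Icc a b) g :=
  stmt2_general a b c d hcd hdb g hnonneg hzero hconv1 hconv2
end

section
/- Let σ > 0 and N > 0. The function f(p, q) := σ² · q · (1 + p/N)^(−1/q) is convex on the set {(p, q) ∈ ℝ² : p > 0, q > 0}. -/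
open Set Real

/-!
Writing `u = 1 + p / N`, the function is `σ² · q · exp (-log u / q)`, i.e. `σ²` times the
perspective `(t, q) ↦ q · exp (t / q)` of `exp` evaluated at `t = -log u`. The perspective of a
convex function is jointly convex, and this one is nondecreasing in `t`, so precomposing its first
argument with the convex function `p ↦ -log (1 + p / N)` keeps it convex.
-/

theorem ConvexOn.perspective {φ : ℝ → ℝ} (hφ : ConvexOn ℝ univ φ) :
    ConvexOn ℝ (univ ×ˢ Ioi 0) (fun x : ℝ × ℝ => x.2 * φ (x.1 / x.2)) := by
  refine ⟨convex_univ.prod (convex_Ioi 0), ?_⟩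
  rintro ⟨t₁, q₁⟩ ⟨-, hq₁ : 0 < q₁⟩ ⟨t₂, q₂⟩ ⟨-, hq₂ : 0 < q₂⟩ a b ha hb hab
  simp only [Prod.smul_mk, Prod.mk_add_mk, smul_eq_mul]
  set Q := a * q₁ + b * q₂
  have hQ : 0 < Q := convex_Ioi (0 : ℝ) hq₁ hq₂ ha hb hab
  -- `(a t₁ + b t₂) / Q` is the convex combination of `t₁ / q₁` and `t₂ / q₂`
  -- with weights `a q₁ / Q` and `b q₂ / Q`
  have hw : a * q₁ / Q + b * q₂ / Q = 1 := by rw [← add_div, div_self hQ.ne']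
  have key := hφ.2 (mem_univ (t₁ / q₁)) (mem_univ (t₂ / q₂)) (by positivity : 0 ≤ a * q₁ / Q)
    (by positivity : 0 ≤ b * q₂ / Q) hw
  have hpt : a * q₁ / Q * (t₁ / q₁) + b * q₂ / Q * (t₂ / q₂) = (a * t₁ + b * t₂) / Q := by
    field_simp
  simp only [smul_eq_mul, hpt] at key
  calc Q * φ ((a * t₁ + b * t₂) / Q)
      ≤ Q * (a * q₁ / Q * φ (t₁ / q₁) + b * q₂ / Q * φ (t₂ / q₂)) := by gcongr
    _ = a * (q₁ * φ (t₁ / q₁)) + b * (q₂ * φ (t₂ / q₂)) := by field_simp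

theorem ConvexOn.comp_fst_of_monotone {E F : Type*} [AddCommGroup E] [Module ℝ E]
    [AddCommGroup F] [Module ℝ F] {s : Set E} {t : Set F} {Φ : ℝ × F → ℝ} {g : E → ℝ}
    (hΦ : ConvexOn ℝ (univ ×ˢ t) Φ) (hΦ_mono : ∀ y ∈ t, Monotone fun r => Φ (r, y))
    (hg : ConvexOn ℝ s g) :
    ConvexOn ℝ (s ×ˢ t) (fun x => Φ (g x.1, x.2)) := by
  have ht : Convex ℝ t := by
    simpa [Set.snd_image_prod univ_nonempty] using hΦ.1.linear_image (LinearMap.snd ℝ ℝ F)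
  refine ⟨hg.1.prod ht, ?_⟩
  rintro ⟨x₁, y₁⟩ ⟨hx₁, hy₁⟩ ⟨x₂, y₂⟩ ⟨hx₂, hy₂⟩ a b ha hb hab
  simp only [Prod.smul_mk, Prod.mk_add_mk, smul_eq_mul]
  calc Φ (g (a • x₁ + b • x₂), a • y₁ + b • y₂)
      ≤ Φ (a * g x₁ + b * g x₂, a • y₁ + b • y₂) :=
        hΦ_mono _ (ht hy₁ hy₂ ha hb hab) (hg.2 hx₁ hx₂ ha hb hab)
    _ ≤ a * Φ (g x₁, y₁) + b * Φ (g x₂, y₂) :=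
        hΦ.2 (mk_mem_prod (mem_univ _) hy₁) (mk_mem_prod (mem_univ _) hy₂) ha hb hab

theorem convexOn_neg_log_one_add_div {N : ℝ} (hN : 0 < N) :
    ConvexOn ℝ (Ioi 0) (fun p => -log (1 + p / N)) := by
  refine ConcaveOn.neg ⟨convex_Ioi 0, fun p₁ hp₁ p₂ hp₂ a b ha hb hab => ?_⟩
  have hu : ∀ p ∈ Ioi (0 : ℝ), 1 + p / N ∈ Ioi 0 := fun p (hp : 0 < p) => by
    simp only [mem_Ioi]; positivity
  have := strictConcaveOn_log_Ioi.concaveOn.2 (hu p₁ hp₁) (hu p₂ hp₂) ha hb hab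
  convert this using 2
  simp only [smul_eq_mul]
  linear_combination -hab

theorem stmt3_general (σ N : ℝ) (hN : 0 < N) :
    ConvexOn ℝ (Set.Ioi (0 : ℝ) ×ˢ Set.Ioi (0 : ℝ))
      (fun x : ℝ × ℝ => σ ^ 2 * x.2 * (1 + x.1 / N) ^ (-(1 / x.2))) := by
  have hexp_mono : ∀ q ∈ Ioi (0 : ℝ), Monotone fun r => q * exp (r / q) :=
    fun q (hq : 0 < q) r r' h => by dsimp only; gcongr
  have hconv : ConvexOn ℝ (Ioi 0 ×ˢ Ioi 0) fun x : ℝ × ℝ => x.2 * exp (-log (1 + x.1 / N) / x.2) :=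
    convexOn_exp.perspective.comp_fst_of_monotone hexp_mono (convexOn_neg_log_one_add_div hN)
  refine (hconv.smul (sq_nonneg σ)).congr ?_
  rintro ⟨p, q⟩ ⟨hp : 0 < p, -⟩
  simp only [smul_eq_mul]
  rw [rpow_def_of_pos (by positivity)]
  ring_nf

/-- For `σ, N > 0`, the Gaussian weighted distortion
`f(p, q) = σ² · q · (1 + p/N) ^ (−1/q)` is convex on `{(p, q) : p > 0, q > 0}`. -/
theorem stmt3 (σ N : ℝ) (hσ : 0 < σ) (hN : 0 < N) :
    ConvexOn ℝ (Set.Ioi (0 : ℝ) ×ˢ Set.Ioi (0 : ℝ))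
      (fun x : ℝ × ℝ => σ ^ 2 * x.2 * (1 + x.1 / N) ^ (-(1 / x.2))) :=
  stmt3_general σ N hN
end

section
/- Let 0 < D_max < ∞ and let R_s : (0, D_max) → ℝ be twice differentiable with R_s(D) > 0, R_s′(D) < 0, and R_s″(D) > 0 for all D ∈ (0, D_max). Suppose R_s(D)/R_s′(D) → β_max as D → 0⁺ and R_s(D)/R_s′(D) − D → β_min as D → D_max⁻. Then for every β with β_min < β < β_max there exists a unique D ∈ (0, D_max) satisfying R_s(D)/R_s′(D) − D = β. -/
/-!
With `g D = R D / R' D - D`, the quotient rule gives `g' = -R R'' / R'²`, which is negative, so `g`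
is strictly decreasing on `(0, Dmax)`. As `g` tends to `βmax` at `0⁺` and to `βmin` at `Dmax⁻`, the
intermediate value theorem solves `g D = β`, and strict monotonicity makes the solution unique.
-/

open Set Filter Topology

section IntermediateValue

variable {α δ : Type*} [ConditionallyCompleteLinearOrder α] [TopologicalSpace α] [OrderTopology α]
  [DenselyOrdered α] [LinearOrder δ] [TopologicalSpace δ] [OrderClosedTopology δ]

theorem existsUnique_mem_Ioo_eq_of_tendsto {g : α → δ} {a b : α} (hab : a < b)
    (hg : ContinuousOn g (Ioo a b)) (hinj : InjOn g (Ioo a b)) {la lb y : δ}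
    (ha : Tendsto g (𝓝[>] a) (𝓝 la)) (hb : Tendsto g (𝓝[<] b) (𝓝 lb))
    (hlb : lb < y) (hla : y < la) :
    ∃! x, x ∈ Ioo a b ∧ g x = y := by
  have : (𝓝[>] a).NeBot := nhdsGT_neBot_of_exists_gt ⟨b, hab⟩
  have : (𝓝[<] b).NeBot := nhdsLT_neBot_of_exists_lt ⟨a, hab⟩
  obtain ⟨x₁, hx₁, hgx₁⟩ :=
    (Eventually.and (Ioo_mem_nhdsGT hab) (ha.eventually (eventually_gt_nhds hla))).exists
  obtain ⟨x₂, hx₂, hgx₂⟩ :=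
    (Eventually.and (Ioo_mem_nhdsLT hab) (hb.eventually (eventually_lt_nhds hlb))).exists
  obtain ⟨x, hx, hgx⟩ := hg.surjOn_uIcc hx₁ hx₂ (mem_uIcc.2 (Or.inr ⟨hgx₂.le, hgx₁.le⟩))
  exact ⟨x, ⟨hx, hgx⟩, fun x' hx' => hinj hx'.1 hx (hx'.2.trans hgx.symm)⟩

end IntermediateValue

section DivDerivSubId

variable {f : ℝ → ℝ}

theorem hasDerivAt_div_deriv_sub_id {x : ℝ} (hf : DifferentiableAt ℝ f x)
    (hf' : DifferentiableAt ℝ (deriv f) x) (hne : deriv f x ≠ 0) :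
    HasDerivAt (fun y => f y / deriv f y - y) (-(f x * deriv (deriv f) x) / deriv f x ^ 2) x := by
  refine ((hf.hasDerivAt.div hf'.hasDerivAt hne).sub (hasDerivAt_id x)).congr_deriv ?_
  field_simp
  ring

theorem strictAntiOn_div_deriv_sub_id {s : Set ℝ} (hs : IsOpen s) (hs' : Convex ℝ s)
    (hf : ∀ x ∈ s, DifferentiableAt ℝ f x) (hf' : ∀ x ∈ s, DifferentiableAt ℝ (deriv f) x)
    (hpos : ∀ x ∈ s, 0 < f x) (hne : ∀ x ∈ s, deriv f x ≠ 0)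
    (hconv : ∀ x ∈ s, 0 < deriv (deriv f) x) :
    StrictAntiOn (fun y => f y / deriv f y - y) s := by
  have hderiv x (hx : x ∈ s) := hasDerivAt_div_deriv_sub_id (hf x hx) (hf' x hx) (hne x hx)
  refine strictAntiOn_of_deriv_neg hs' (fun x hx => (hderiv x hx).continuousAt.continuousWithinAt)
    fun x hx => ?_
  rw [hs.interior_eq] at hx
  rw [(hderiv x hx).deriv, neg_div, neg_lt_zero]
  exact div_pos (mul_pos (hpos x hx) (hconv x hx)) (pow_two_pos_of_ne_zero (hne x hx))

end DivDerivSubId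

/-- Lemma 2 of the paper: With `0 < Dmax < ∞`, if `Rs` is twice
differentiable on `(0, Dmax)` with `Rs > 0`, `Rs' < 0`, `Rs'' > 0` there,
`Rs/Rs' → βmax` as `D → 0⁺` and `Rs/Rs' − D → βmin` as `D → Dmax⁻`, then for
every `β ∈ (βmin, βmax)` there is a unique `D ∈ (0, Dmax)` with
`Rs(D)/Rs'(D) − D = β`. -/
theorem stmt5
    (Dmax : ℝ) (hDmax : 0 < Dmax)
    (Rs : ℝ → ℝ)
    (hdiff : ∀ d ∈ Set.Ioo 0 Dmax, DifferentiableAt ℝ Rs d)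
    (hdiff2 : ∀ d ∈ Set.Ioo 0 Dmax, DifferentiableAt ℝ (deriv Rs) d)
    (hRsPos : ∀ d ∈ Set.Ioo 0 Dmax, 0 < Rs d)
    (hRs' : ∀ d ∈ Set.Ioo 0 Dmax, deriv Rs d < 0)
    (hRs'' : ∀ d ∈ Set.Ioo 0 Dmax, 0 < deriv (deriv Rs) d)
    (βmax βmin : ℝ)
    (hβmax : Tendsto (fun D : ℝ => Rs D / deriv Rs D)
      (nhdsWithin 0 (Set.Ioi 0)) (nhds βmax))
    (hβmin : Tendsto (fun D : ℝ => Rs D / deriv Rs D - D)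
      (nhdsWithin Dmax (Set.Iio Dmax)) (nhds βmin)) :
    ∀ β : ℝ, βmin < β → β < βmax →
      ∃! D : ℝ, D ∈ Set.Ioo 0 Dmax ∧ Rs D / deriv Rs D - D = β := by
  intro β hβmin_lt hlt_βmax
  have hne : ∀ d ∈ Ioo 0 Dmax, deriv Rs d ≠ 0 := fun d hd => (hRs' d hd).ne
  have hcont : ContinuousOn (fun D => Rs D / deriv Rs D - D) (Ioo 0 Dmax) :=
    fun d hd => (hasDerivAt_div_deriv_sub_id (hdiff d hd) (hdiff2 d hd) (hne d hd)).continuousAt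
      |>.continuousWithinAt
  have hanti := strictAntiOn_div_deriv_sub_id isOpen_Ioo (convex_Ioo 0 Dmax) hdiff hdiff2
    hRsPos hne hRs''
  have hlim_zero : Tendsto (fun D => Rs D / deriv Rs D - D) (𝓝[>] 0) (𝓝 βmax) := by
    simpa using hβmax.sub (tendsto_nhdsWithin_of_tendsto_nhds tendsto_id)
  exact existsUnique_mem_Ioo_eq_of_tendsto hDmax hcont hanti.injOn hlim_zero hβmin
    hβmin_lt hlt_βmax
end

section
/- Let σ, N > 0 and β ∈ ℝ. Suppose p₁, κ₁ > 0 and p₂, κ₂ > 0 both satisfy σ²·(1 + pᵢ/N)^(−κᵢ)·(1 + κᵢ·ln(1 + pᵢ/N)) + β = 0 for i = 1, 2. Then σ²·(1 + p₁/N)^(−κ₁) = σ²·(1 + p₂/N)^(−κ₂). -/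
/-!
Writing `t = κ log(1 + p/N) ≥ 0`, the distortion is `σ² e^{-t}` and the optimality condition reads
`σ² e^{-t}(1 + t) = -β`. The function `t ↦ e^{-t}(1 + t)` is strictly decreasing on `[0, ∞)`,
so the condition determines `t`, and with it the distortion.
-/

open Real Set

theorem strictAntiOn_exp_neg_mul_one_add : StrictAntiOn (fun t => exp (-t) * (1 + t)) (Ici 0) := by
  intro a (ha : 0 ≤ a) b _ hab
  -- `e^{b-a} > 1 + (b - a)` and `(1 + (b - a))(1 + a) ≥ 1 + b` for `a ≥ 0`
  have hexp : 1 + b < exp (b - a) * (1 + a) := by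
    have := add_one_lt_exp (sub_ne_zero.mpr hab.ne')
    nlinarith
  calc exp (-b) * (1 + b) < exp (-b) * (exp (b - a) * (1 + a)) :=
        mul_lt_mul_of_pos_left hexp (exp_pos _)
    _ = exp (-a) * (1 + a) := by rw [← mul_assoc, ← exp_add]; ring_nf

theorem rpow_neg_eq_exp_neg_mul_log {x : ℝ} (hx : 0 < x) (κ : ℝ) :
    x ^ (-κ) = exp (-(κ * log x)) := by
  rw [rpow_def_of_pos hx]; ring_nf

theorem rpow_neg_eq_of_rpow_neg_mul_one_add_mul_log_eq {x y κ μ : ℝ} (hx : 1 ≤ x) (hy : 1 ≤ y)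
    (hκ : 0 ≤ κ) (hμ : 0 ≤ μ)
    (h : x ^ (-κ) * (1 + κ * log x) = y ^ (-μ) * (1 + μ * log y)) :
    x ^ (-κ) = y ^ (-μ) := by
  rw [rpow_neg_eq_exp_neg_mul_log (by linarith), rpow_neg_eq_exp_neg_mul_log (by linarith)] at h ⊢
  have hs : κ * log x = μ * log y :=
    strictAntiOn_exp_neg_mul_one_add.injOn (mul_nonneg hκ (log_nonneg hx))
      (mul_nonneg hμ (log_nonneg hy)) h
  rw [hs]

/-- If two power/mismatch pairs `(p₁, κ₁)` and `(p₂, κ₂)` both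
satisfy the local-optimality condition
`σ²(1+p/N)^(−κ)(1 + κ ln(1+p/N)) + β = 0` with the same `β`, then they produce
the same instantaneous distortion `σ²(1+p/N)^(−κ)`. -/
theorem stmt10 (σ N β p₁ κ₁ p₂ κ₂ : ℝ) (hσ : 0 < σ) (hN : 0 < N)
    (hp₁ : 0 < p₁) (hκ₁ : 0 < κ₁) (hp₂ : 0 < p₂) (hκ₂ : 0 < κ₂)
    (heq₁ : σ ^ 2 * (1 + p₁ / N) ^ (-κ₁) * (1 + κ₁ * Real.log (1 + p₁ / N)) + β = 0)
    (heq₂ : σ ^ 2 * (1 + p₂ / N) ^ (-κ₂) * (1 + κ₂ * Real.log (1 + p₂ / N)) + β = 0) :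
    σ ^ 2 * (1 + p₁ / N) ^ (-κ₁) = σ ^ 2 * (1 + p₂ / N) ^ (-κ₂) := by
  have hσ₂ : σ ^ 2 ≠ 0 := pow_ne_zero 2 hσ.ne'
  have hcond : (1 + p₁ / N) ^ (-κ₁) * (1 + κ₁ * log (1 + p₁ / N)) =
      (1 + p₂ / N) ^ (-κ₂) * (1 + κ₂ * log (1 + p₂ / N)) :=
    mul_left_cancel₀ hσ₂ (by linarith)
  rw [rpow_neg_eq_of_rpow_neg_mul_one_add_mul_log_eq
    (le_add_of_nonneg_right (div_nonneg hp₁.le hN.le))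
    (le_add_of_nonneg_right (div_nonneg hp₂.le hN.le)) hκ₁.le hκ₂.le hcond]
end

section
/- Let δ, λ > 0, let D̃ : (0, ∞) → ℝ be twice differentiable with D̃″(p) > 0 for all p > 0, and let C ∈ ℝ satisfy C < −λ·D̃(δ/λ). Let I ⊆ ℝ be an open interval and let p : I → ℝ be differentiable with p(z) > 0 for all z ∈ I and λ·D̃(p(z)) + (δ − λ·p(z))·D̃′(p(z)) + p(z)·p′(z)·D̃″(p(z)) + C = 0 for all z ∈ I. Then p′(z) > 0 for all z ∈ I; in particular p is strictly increasing on I. -/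
/-!
The first two terms of the equation are `λ` times the tangent line of `D̃` at `p(z)`, evaluated
at `δ/λ`. By convexity of `D̃` they are at most `λ D̃(δ/λ) < -C`, so the remaining term
`p p' D̃''` is positive, and `p > 0`, `D̃'' > 0` force `p' > 0`.
-/

open Set

theorem strictMonoOn_of_forall_deriv_pos {D : Set ℝ} (hD : Convex ℝ D) {f : ℝ → ℝ}
    (hf' : ∀ x ∈ D, 0 < deriv f x) : StrictMonoOn f D :=
  strictMonoOn_of_deriv_pos hD
    (fun x hx => (differentiableAt_of_deriv_ne_zero (hf' x hx).ne').continuousAt.continuousWithinAt)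
    (fun x hx => hf' x (interior_subset hx))

theorem ConvexOn.add_sub_mul_deriv_le {S : Set ℝ} {f : ℝ → ℝ} (hf : ConvexOn ℝ S f) {x y : ℝ}
    (hx : x ∈ S) (hy : y ∈ S) (hfx : DifferentiableAt ℝ f x) :
    f x + (y - x) * deriv f x ≤ f y := by
  rcases lt_trichotomy x y with hxy | rfl | hyx
  · have h := hf.deriv_le_slope hx hy hxy hfx
    rw [slope_def_field, le_div_iff₀ (sub_pos.2 hxy)] at h
    linarith
  · simp
  · have h := hf.slope_le_deriv hy hx hyx hfx
    rw [slope_def_field, div_le_iff₀ (sub_pos.2 hyx)] at h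
    linarith

theorem convexOn_Ioi_of_deriv2_pos {f : ℝ → ℝ} (hf : ∀ q : ℝ, 0 < q → DifferentiableAt ℝ f q)
    (hf'' : ∀ q : ℝ, 0 < q → 0 < deriv (deriv f) q) : ConvexOn ℝ (Ioi 0) f :=
  convexOn_of_deriv2_nonneg' (convex_Ioi 0)
    (fun q hq => (hf q hq).differentiableWithinAt)
    (fun q hq => (differentiableAt_of_deriv_ne_zero (hf'' q hq).ne').differentiableWithinAt)
    (fun q hq => (hf'' q hq).le)

theorem stmt14_general (δ lam C : ℝ) (hδ : 0 < δ) (hlam : 0 < lam)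
    (Dt : ℝ → ℝ)
    (hdiff : ∀ q : ℝ, 0 < q → DifferentiableAt ℝ Dt q)
    (hconv : ∀ q : ℝ, 0 < q → 0 < deriv (deriv Dt) q)
    (hC : C < -(lam * Dt (δ / lam)))
    (I : Set ℝ) (hIconv : Convex ℝ I)
    (p : ℝ → ℝ)
    (hppos : ∀ z ∈ I, 0 < p z)
    (hODE : ∀ z ∈ I,
      lam * Dt (p z) + (δ - lam * p z) * deriv Dt (p z)
        + p z * deriv p z * deriv (deriv Dt) (p z) + C = 0) :
    (∀ z ∈ I, 0 < deriv p z) ∧ StrictMonoOn p I := by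
  have hDt : ConvexOn ℝ (Ioi 0) Dt := convexOn_Ioi_of_deriv2_pos hdiff hconv
  have hderiv_pos : ∀ z ∈ I, 0 < deriv p z := by
    intro z hz
    have hpz := hppos z hz
    have htangent := hDt.add_sub_mul_deriv_le hpz (div_pos hδ hlam) (hdiff (p z) hpz)
    have hlinear : lam * Dt (p z) + (δ - lam * p z) * deriv Dt (p z) ≤ lam * Dt (δ / lam) :=
      calc _ = lam * (Dt (p z) + (δ / lam - p z) * deriv Dt (p z)) := by field_simp
        _ ≤ lam * Dt (δ / lam) := by gcongr
    have hprod : 0 < p z * deriv p z * deriv (deriv Dt) (p z) := by linarith [hODE z hz]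
    exact pos_of_mul_pos_right ((pos_iff_pos_of_mul_pos hprod).2 (hconv _ hpz)) hpz.le
  exact ⟨hderiv_pos, strictMonoOn_of_forall_deriv_pos hIconv hderiv_pos⟩

/-- Remark 5 of the paper: For `δ, λ > 0`, a twice differentiable
strictly convex `D̃` on `(0, ∞)`, and `C < −λ·D̃(δ/λ)`, any differentiable
solution `p` of the ODE
`λ·D̃(p(z)) + (δ − λp(z))·D̃'(p(z)) + p(z)·p'(z)·D̃''(p(z)) + C = 0`
on an open interval `I` with `p > 0` on `I` has `p' > 0` on `I`; in particular
`p` is strictly increasing on `I`. -/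
theorem stmt14 (δ lam C : ℝ) (hδ : 0 < δ) (hlam : 0 < lam)
    (Dt : ℝ → ℝ)
    (hdiff : ∀ q : ℝ, 0 < q → DifferentiableAt ℝ Dt q)
    (hdiff2 : ∀ q : ℝ, 0 < q → DifferentiableAt ℝ (deriv Dt) q)
    (hconv : ∀ q : ℝ, 0 < q → 0 < deriv (deriv Dt) q)
    (hC : C < -(lam * Dt (δ / lam)))
    (I : Set ℝ) (hIopen : IsOpen I) (hIconv : Convex ℝ I)
    (p : ℝ → ℝ)
    (hpdiff : ∀ z ∈ I, DifferentiableAt ℝ p z)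
    (hppos : ∀ z ∈ I, 0 < p z)
    (hODE : ∀ z ∈ I,
      lam * Dt (p z) + (δ - lam * p z) * deriv Dt (p z)
        + p z * deriv p z * deriv (deriv Dt) (p z) + C = 0) :
    (∀ z ∈ I, 0 < deriv p z) ∧ StrictMonoOn p I :=
  stmt14_general δ lam C hδ hlam Dt hdiff hconv hC I hIconv p hppos hODE
end

section
/- Let L > 0, δ > 0, λ > 0, π₀ ∈ ℝ, let w : (0, L] → (0, ∞) be continuous with u ↦ 1/w(u) integrable on (0, L], and let f : (0, L] → ℝ be continuous such that u ↦ e^{λu}·f(u) is integrable on (0, L] and f(z)·w(z) = δ·e^{−λz}·(π₀ + ∫₀^z e^{λu}·f(u) du) for every z ∈ (0, L]. Then f(z) = π₀ · (δ·e^{−λz}/w(z)) · exp(δ·∫₀^z du/w(u)) for every z ∈ (0, L]. -/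
/-!
Multiplying the balance equation by `e^{λz} / w(z)` shows that `G(z) = π₀ + ∫₀^z e^{λu} f(u) du`
solves the linear equation `G' = (δ / w) G`. Hence `G · exp (-δ ∫₀^z 1/w)` has zero derivative
on `(0, L)`, is continuous up to `0` by integrability, and so equals its value `π₀` at `0`.
-/

open Set MeasureTheory

section LinearIntegralEquation

variable {a b : ℝ} {g k : ℝ → ℝ}

theorem hasDerivAt_setIntegral_Ioc_right (hg : IntegrableOn g (Ioc a b))
    (hgc : ContinuousOn g (Ioo a b)) {x : ℝ} (hx : x ∈ Ioo a b) :
    HasDerivAt (fun z => ∫ u in Ioc a z, g u) (g x) x := by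
  have hgx : ContinuousAt g x := hgc.continuousAt (isOpen_Ioo.mem_nhds hx)
  have hint : IntervalIntegrable g volume a x :=
    (intervalIntegrable_iff_integrableOn_Ioc_of_le hx.1.le).2
      (hg.mono_set (Ioc_subset_Ioc_right hx.2.le))
  refine (intervalIntegral.integral_hasDerivAt_right hint
    (hgc.stronglyMeasurableAtFilter isOpen_Ioo x hx) hgx).congr_of_eventuallyEq ?_
  filter_upwards [Ioi_mem_nhds hx.1] with y hy
  exact (intervalIntegral.integral_of_le hy.le).symm

theorem add_setIntegral_Ioc_eq_mul_exp (hab : a < b) (c : ℝ) (hg : IntegrableOn g (Ioc a b))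
    (hk : IntegrableOn k (Ioc a b)) (hkc : ContinuousOn k (Ioo a b))
    (heq : ∀ x ∈ Ioo a b, g x = (c + ∫ u in Ioc a x, g u) * k x) :
    c + ∫ u in Ioc a b, g u = c * Real.exp (∫ u in Ioc a b, k u) := by
  set G : ℝ → ℝ := fun z => c + ∫ u in Ioc a z, g u
  set P : ℝ → ℝ := fun z => ∫ u in Ioc a z, k u
  have hGc : ContinuousOn G (Icc a b) := continuousOn_const.add
    (intervalIntegral.continuousOn_primitive ((integrableOn_Icc_iff_integrableOn_Ioc).2 hg))
  have hPc : ContinuousOn P (Icc a b) :=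
    intervalIntegral.continuousOn_primitive ((integrableOn_Icc_iff_integrableOn_Ioc).2 hk)
  have hgc : ContinuousOn g (Ioo a b) :=
    ((hGc.mono Ioo_subset_Icc_self).mul hkc).congr heq
  have hderiv : ∀ x ∈ Ioo a b, HasDerivAt (fun z => G z * Real.exp (-P z)) 0 x := by
    intro x hx
    have h : HasDerivAt (fun z => G z * Real.exp (-P z))
        (g x * Real.exp (-P x) + G x * (Real.exp (-P x) * -k x)) x :=
      ((hasDerivAt_setIntegral_Ioc_right hg hgc hx).const_add c).mul
        (hasDerivAt_setIntegral_Ioc_right hk hkc hx).neg.exp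
    convert h using 1
    rw [heq x hx]
    ring
  obtain ⟨x, -, hx⟩ := exists_hasDerivAt_eq_slope _ _ hab
    (hGc.mul hPc.neg.rexp) hderiv
  have hconst : G b * Real.exp (-P b) = c := by
    have := (div_eq_zero_iff.1 hx.symm).resolve_right (sub_ne_zero.2 hab.ne')
    simpa [G, P, sub_eq_zero] using this
  calc G b = G b * Real.exp (-P b) * Real.exp (P b) := by
        rw [mul_assoc, ← Real.exp_add, neg_add_cancel, Real.exp_zero, mul_one]
    _ = c * Real.exp (P b) := by rw [hconst]

end LinearIntegralEquation

theorem stmt15_general (L δ lam π₀ : ℝ)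
    (w f : ℝ → ℝ)
    (hwcont : ContinuousOn w (Set.Ioc 0 L))
    (hwpos : ∀ u ∈ Set.Ioc 0 L, 0 < w u)
    (hwint : IntegrableOn (fun u => 1 / w u) (Set.Ioc 0 L))
    (hfint : IntegrableOn (fun u => Real.exp (lam * u) * f u) (Set.Ioc 0 L))
    (heq : ∀ z ∈ Set.Ioc 0 L,
      f z * w z = δ * Real.exp (-lam * z) *
        (π₀ + ∫ u in Set.Ioc 0 z, Real.exp (lam * u) * f u)) :
    ∀ z ∈ Set.Ioc 0 L,
      f z = π₀ * (δ * Real.exp (-lam * z) / w z) *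
        Real.exp (δ * ∫ u in Set.Ioc 0 z, 1 / w u) := by
  intro z hz
  have hsub : Ioc 0 z ⊆ Ioc 0 L := Ioc_subset_Ioc_right hz.2
  have hIoo : Ioo 0 z ⊆ Ioc 0 L := Ioo_subset_Ioc_self.trans hsub
  have hsol : π₀ + ∫ u in Ioc 0 z, Real.exp (lam * u) * f u =
      π₀ * Real.exp (δ * ∫ u in Ioc 0 z, 1 / w u) := by
    rw [← integral_const_mul]
    refine add_setIntegral_Ioc_eq_mul_exp hz.1 π₀ (hfint.mono_set hsub)
      ((hwint.mono_set hsub).const_mul δ) ?_ fun x hx => ?_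
    · exact continuousOn_const.mul (continuousOn_const.div
        (hwcont.mono hIoo) fun x hx => (hwpos x (hIoo hx)).ne')
    · have hw := (hwpos x (hIoo hx)).ne'
      have h := heq x (hIoo hx)
      rw [neg_mul, Real.exp_neg] at h
      field_simp at h ⊢
      linear_combination h
  have hw := (hwpos z hz).ne'
  have h := heq z hz
  rw [hsol, neg_mul] at h
  rw [neg_mul]
  field_simp
  linear_combination h

/-- Explicit solution of the stationarity (level-crossing) integral
equation for the stationary battery density. If on `(0, L]` the continuous
functions `f` and `w > 0` satisfy
`f(z)·w(z) = δ·e^{−λz}·(π₀ + ∫₀^z e^{λu} f(u) du)`, with `1/w` and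
`u ↦ e^{λu} f(u)` integrable on `(0, L]`, then
`f(z) = π₀ · (δ e^{−λz}/w(z)) · exp(δ ∫₀^z du/w(u))` for every `z ∈ (0, L]`. -/
theorem stmt15 (L δ lam π₀ : ℝ) (hL : 0 < L) (hδ : 0 < δ) (hlam : 0 < lam)
    (w f : ℝ → ℝ)
    (hwcont : ContinuousOn w (Set.Ioc 0 L))
    (hwpos : ∀ u ∈ Set.Ioc 0 L, 0 < w u)
    (hwint : IntegrableOn (fun u => 1 / w u) (Set.Ioc 0 L))
    (hfcont : ContinuousOn f (Set.Ioc 0 L))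
    (hfint : IntegrableOn (fun u => Real.exp (lam * u) * f u) (Set.Ioc 0 L))
    (heq : ∀ z ∈ Set.Ioc 0 L,
      f z * w z = δ * Real.exp (-lam * z) *
        (π₀ + ∫ u in Set.Ioc 0 z, Real.exp (lam * u) * f u)) :
    ∀ z ∈ Set.Ioc 0 L,
      f z = π₀ * (δ * Real.exp (-lam * z) / w z) *
        Real.exp (δ * ∫ u in Set.Ioc 0 z, 1 / w u) :=
  stmt15_general L δ lam π₀ w f hwcont hwpos hwint hfint heq
end

section
/- Let σ, N, δ, λ, L > 0 and set P̄ := (δ/λ)·(1 − e^{−λL}). Let (Ω, 𝔉, μ) be a probability space and let p, κ : Ω → ℝ be measurable with p(ω) ≥ 0 and κ(ω) > 0 for μ-almost every ω, p integrable, 1/κ integrable with ∫ (1/κ) dμ = 1, ∫ p dμ ≤ P̄, and ω ↦ (σ²/κ(ω))·(1 + p(ω)/N)^(−κ(ω)) integrable. Then ∫ (σ²/κ(ω))·(1 + p(ω)/N)^(−κ(ω)) dμ(ω) ≥ σ²·(1 + P̄/N)^(−1). -/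
/-!
With `w = 1/κ` and `u = 1 + p/N`, the weighted distortion `w · u^(-1/w)` is jointly convex in
`(w, u)`: it is the perspective of `x ↦ e^(-x)` composed with the concave `log u`. Hence it lies
above its tangent plane at `(w, u) = (1, v)` with `v = 1 + P̄/N`. Integrating this affine minorant,
`∫ 1/κ dμ = 1` cancels the `w`-term and the power budget `∫ u dμ ≤ v` controls the `u`-term.
-/

open Real MeasureTheory

theorem affine_le_inv_mul_rpow_neg {u v k : ℝ} (hu : 0 < u) (hv : 0 < v) (hk : 0 < k) :
    k⁻¹ * (v⁻¹ * (1 + log v)) - v⁻¹ * log v - v⁻¹ ^ 2 * (u - v) ≤ k⁻¹ * u ^ (-k) := by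
  have hexp : v⁻¹ * (1 + log v - k * log u) ≤ u ^ (-k) :=
    calc v⁻¹ * (1 + log v - k * log u) = exp (-log v) * (log v - k * log u + 1) := by
          rw [exp_neg, exp_log hv]; ring
      _ ≤ exp (-log v) * exp (log v - k * log u) := by gcongr; exact add_one_le_exp _
      _ = u ^ (-k) := by rw [← exp_add, rpow_def_of_pos hu]; ring_nf
  have hlog : log u ≤ log v + v⁻¹ * (u - v) := by
    have h := log_le_sub_one_of_pos (div_pos hu hv)
    rw [log_div hu.ne' hv.ne'] at h
    have : u / v - 1 = v⁻¹ * (u - v) := by field_simp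
    linarith
  calc k⁻¹ * (v⁻¹ * (1 + log v)) - v⁻¹ * log v - v⁻¹ ^ 2 * (u - v)
      ≤ k⁻¹ * (v⁻¹ * (1 + log v)) - v⁻¹ * log u := by
        have := mul_le_mul_of_nonneg_left hlog (inv_nonneg.2 hv.le)
        linarith
    _ = k⁻¹ * (v⁻¹ * (1 + log v - k * log u)) := by field_simp
    _ ≤ k⁻¹ * u ^ (-k) := by gcongr

theorem inv_le_integral_inv_mul_rpow_neg {Ω : Type*} [MeasurableSpace Ω] {μ : Measure Ω}
    [IsProbabilityMeasure μ] {u κ : Ω → ℝ} {v : ℝ} (hv : 0 < v)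
    (hu : ∀ᵐ ω ∂μ, 0 < u ω) (hκ : ∀ᵐ ω ∂μ, 0 < κ ω)
    (hu_int : Integrable u μ) (hκ_int : Integrable (fun ω => (κ ω)⁻¹) μ)
    (hκ_one : ∫ ω, (κ ω)⁻¹ ∂μ = 1) (huv : ∫ ω, u ω ∂μ ≤ v)
    (hf : Integrable (fun ω => (κ ω)⁻¹ * u ω ^ (-κ ω)) μ) :
    v⁻¹ ≤ ∫ ω, (κ ω)⁻¹ * u ω ^ (-κ ω) ∂μ := by
  set a := v⁻¹ * (1 + log v)
  set b := v⁻¹ * log v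
  set c := v⁻¹ ^ 2
  have h_ab : Integrable (fun ω => (κ ω)⁻¹ * a - b) μ :=
    (hκ_int.mul_const a).sub (integrable_const b)
  have h_c : Integrable (fun ω => c * (u ω - v)) μ :=
    (hu_int.sub (integrable_const v)).const_mul c
  have hg_eq : ∫ ω, (κ ω)⁻¹ * a - b - c * (u ω - v) ∂μ = a - b - c * (∫ ω, u ω ∂μ - v) := by
    rw [integral_sub h_ab h_c, integral_sub (hκ_int.mul_const a) (integrable_const b),
      integral_mul_const, hκ_one, integral_const, integral_const_mul,
      integral_sub hu_int (integrable_const v), integral_const]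
    simp
  calc v⁻¹ ≤ a - b - c * (∫ ω, u ω ∂μ - v) := by
        have : 0 ≤ c * (v - ∫ ω, u ω ∂μ) := mul_nonneg (by positivity) (by linarith)
        have : a - b = v⁻¹ := by ring
        linarith
    _ = ∫ ω, (κ ω)⁻¹ * a - b - c * (u ω - v) ∂μ := hg_eq.symm
    _ ≤ ∫ ω, (κ ω)⁻¹ * u ω ^ (-κ ω) ∂μ := integral_mono_ae (h_ab.sub h_c) hf <| by
        filter_upwards [hu, hκ] with ω huω hκω
        exact affine_le_inv_mul_rpow_neg huω hv hκω

theorem stmt17_general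
    (σ N : ℝ) (hσ : 0 < σ) (hN : 0 < N)
    (Pbar : ℝ)
    {Ω : Type*} [MeasurableSpace Ω] (μ : Measure Ω) [IsProbabilityMeasure μ]
    (p κ : Ω → ℝ)
    (hp0 : ∀ᵐ ω ∂μ, 0 ≤ p ω) (hκ0 : ∀ᵐ ω ∂μ, 0 < κ ω)
    (hpint : Integrable p μ)
    (hκint : Integrable (fun ω => 1 / κ ω) μ)
    (hκ1 : ∫ ω, 1 / κ ω ∂μ = 1)
    (hpP : ∫ ω, p ω ∂μ ≤ Pbar)
    (hDint : Integrable
      (fun ω => σ ^ 2 / κ ω * (1 + p ω / N) ^ (-κ ω)) μ) :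
    (∫ ω, σ ^ 2 / κ ω * (1 + p ω / N) ^ (-κ ω) ∂μ) ≥
      σ ^ 2 * (1 + Pbar / N)⁻¹ := by
  simp only [one_div] at hκint hκ1
  have hPbar : 0 ≤ Pbar / N := div_nonneg ((integral_nonneg_of_ae hp0).trans hpP) hN.le
  have hu : ∀ᵐ ω ∂μ, 0 < 1 + p ω / N := by
    filter_upwards [hp0] with ω hpω
    positivity
  have hu_le : ∫ ω, 1 + p ω / N ∂μ ≤ 1 + Pbar / N := by
    rw [integral_add (integrable_const 1) (hpint.div_const N), integral_div]
    simp only [integral_const, probReal_univ, smul_eq_mul, one_mul]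
    gcongr
  have hf : Integrable (fun ω => (κ ω)⁻¹ * (1 + p ω / N) ^ (-κ ω)) μ := by
    refine (hDint.div_const (σ ^ 2)).congr (Filter.Eventually.of_forall fun ω => ?_)
    field_simp
  have key := inv_le_integral_inv_mul_rpow_neg (by linarith) hu hκ0
    ((integrable_const 1).add (hpint.div_const N)) hκint hκ1 hu_le hf
  calc σ ^ 2 * (1 + Pbar / N)⁻¹
      ≤ σ ^ 2 * ∫ ω, (κ ω)⁻¹ * (1 + p ω / N) ^ (-κ ω) ∂μ := by gcongr
    _ = ∫ ω, σ ^ 2 / κ ω * (1 + p ω / N) ^ (-κ ω) ∂μ := by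
        rw [← integral_const_mul]
        simp only [div_eq_mul_inv, mul_assoc]

/-- Gaussian distortion lower bound (equation (75) of the paper).
With `P̄ = (δ/λ)(1 − e^{−λL})`, if the power `p ≥ 0` and mismatch factor `κ > 0`
satisfy `∫ (1/κ) dμ = 1` and `∫ p dμ ≤ P̄`, then the average weighted
distortion satisfies `∫ (σ²/κ)(1 + p/N)^(−κ) dμ ≥ σ²(1 + P̄/N)⁻¹`. -/
theorem stmt17
    (σ N δ lam L : ℝ) (hσ : 0 < σ) (hN : 0 < N) (hδ : 0 < δ)
    (hlam : 0 < lam) (hL : 0 < L)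
    (Pbar : ℝ) (hPbar : Pbar = δ / lam * (1 - Real.exp (-lam * L)))
    {Ω : Type*} [MeasurableSpace Ω] (μ : Measure Ω) [IsProbabilityMeasure μ]
    (p κ : Ω → ℝ) (hpmeas : Measurable p) (hκmeas : Measurable κ)
    (hp0 : ∀ᵐ ω ∂μ, 0 ≤ p ω) (hκ0 : ∀ᵐ ω ∂μ, 0 < κ ω)
    (hpint : Integrable p μ)
    (hκint : Integrable (fun ω => 1 / κ ω) μ)
    (hκ1 : ∫ ω, 1 / κ ω ∂μ = 1)
    (hpP : ∫ ω, p ω ∂μ ≤ Pbar)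
    (hDint : Integrable
      (fun ω => σ ^ 2 / κ ω * (1 + p ω / N) ^ (-κ ω)) μ) :
    (∫ ω, σ ^ 2 / κ ω * (1 + p ω / N) ^ (-κ ω) ∂μ) ≥
      σ ^ 2 * (1 + Pbar / N)⁻¹ :=
  stmt17_general σ N hσ hN Pbar μ p κ hp0 hκ0 hpint hκint hκ1 hpP hDint
end
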